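/- The set-valued map G : ℝ² → Set ℝ² defined by G(x₁,x₂) = {(2,2)} if x₂ ≠ 0 and G(x₁,x₂) = {(s,s) : 1 ≤ s ≤ 2} if x₂ = 0 is pseudomonotone on ℝ². -/

import Mathlib

/-! Every value of `G6` is a positive multiple of the diagonal `(1, 1)`, so the sign of
`⟪vs, w - v⟫` does not depend on the choice of `vs`, nor on the point at which `G6` is taken. -/

open RealInnerProductSpace

noncomputable def G6 : EuclideanSpace ℝ (Fin 2) → Set (EuclideanSpace ℝ (Fin 2)) := fun x =>
  if x 1 ≠ 0 then {WithLp.toLp 2 (fun _ => (2 : ℝ))}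
  else {y | ∃ s : ℝ, 1 ≤ s ∧ s ≤ 2 ∧ y = WithLp.toLp 2 (fun _ => s)}

section Pseudomonotone

variable {E : Type*} [NormedAddCommGroup E] [InnerProductSpace ℝ E]

def IsPseudomonotone (G : E → Set E) : Prop :=
  ∀ v w, (∃ vs ∈ G v, 0 ≤ ⟪vs, w - v⟫) → ∀ ws ∈ G w, 0 ≤ ⟪ws, w - v⟫

theorem isPseudomonotone_of_forall_mem_eq_pos_smul {G : E → Set E} (d : E)
    (hG : ∀ x, ∀ y ∈ G x, ∃ s : ℝ, 0 < s ∧ y = s • d) : IsPseudomonotone G := by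
  rintro v w ⟨vs, hvs, hv⟩ ws hws
  obtain ⟨s, hs, rfl⟩ := hG v vs hvs
  obtain ⟨t, ht, rfl⟩ := hG w ws hws
  rw [real_inner_smul_left] at hv ⊢
  exact mul_nonneg ht.le (nonneg_of_mul_nonneg_right hv hs)

end Pseudomonotone

theorem G6_mem_eq_pos_smul {x y : EuclideanSpace ℝ (Fin 2)} (hy : y ∈ G6 x) :
    ∃ s : ℝ, 0 < s ∧ y = s • WithLp.toLp 2 (fun _ => (1 : ℝ)) := by
  have hconst (s : ℝ) : WithLp.toLp 2 (fun _ : Fin 2 => s) = s • WithLp.toLp 2 (fun _ => (1 : ℝ)) := by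
    ext i
    simp
  unfold G6 at hy
  split_ifs at hy
  · exact ⟨2, two_pos, hy ▸ hconst 2⟩
  · obtain ⟨s, hs, -, rfl⟩ := hy
    exact ⟨s, by linarith, hconst s⟩

/-- The map `G` of Example 2.1 is pseudomonotone on `ℝ²`. -/
theorem stmt_6 :
    ∀ v w : EuclideanSpace ℝ (Fin 2),
      (∃ vs ∈ G6 v, ⟪vs, w - v⟫ ≥ 0) → ∀ ws ∈ G6 w, ⟪ws, w - v⟫ ≥ 0 :=
  isPseudomonotone_of_forall_mem_eq_pos_smul _ fun _ _ => G6_mem_eq_pos_smul
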